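/- Let A ⊆ ℕ and let b ≥ 2 be an integer that is coprime to every element of A. Then the set T of all even subpowers of b is {A, {b}}-multiplicative; moreover T has density b/(b+1), and if A contains some element a with a < b then every {A, {b}}-multiplicative set S satisfies limsup_{n→∞} |S ∩ {1,...,n}|/n ≤ b/(b+1). -/

import Mathlib

/-- `S` is `{A,B}`-multiplicative: `a*x = b*y` implies `a = b` and `x = y`
for all `a ∈ A`, `b ∈ B`, `x, y ∈ S`. -/
def MulSidonSets (A B : Set ℕ) (S : Set ℕ) : Prop :=
  ∀ a ∈ A, ∀ b ∈ B, ∀ x ∈ S, ∀ y ∈ S, a * x = b * y → a = b ∧ x = y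

/-- `x` is an `i`-th subpower of `b`: `x = b^i * y` for some `y ≥ 1` with `b ∤ y`. -/
def IsSubpower (b i x : ℕ) : Prop :=
  ∃ y : ℕ, 0 < y ∧ ¬ b ∣ y ∧ x = b ^ i * y

/-- `x` is an even subpower of `b`. -/
def IsEvenSubpower (b x : ℕ) : Prop :=
  ∃ i : ℕ, Even i ∧ IsSubpower b i x

attribute [local instance] Classical.propDecidable

/-
Every `x ≥ 1` is `b ^ i * y` with `b ∤ y` for exactly one `i` (its `b`-adic valuation);
multiplying by an `a` coprime to `b` keeps `i`, multiplying by `b` raises it by one, so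
`a * x = b * y` is impossible when `x` and `y` both have even valuation.
Multiplication by `b` maps the even subpowers in `[1, n / b]` bijectively onto the remaining
integers of `[1, n]`, so `E n + E (n / b) = n` for their counting function `E`, which forces
`E n = n b / (b + 1) + O(log n)`. Finally, if `a ∈ A` and `a < b`, then `x ↦ a * (x / b)`
injects the elements of `S ∩ [1, n]` of odd valuation into the even subpowers in `[1, n]` that
are missing from `S` (`a * x = b * (a * (x / b))` keeps `a * (x / b)` out of `S`), hence
`|S ∩ [1, n]| ≤ E n`.
-/

open Filter Topology Finset

namespace IsSubpower

variable {b i x : ℕ}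

theorem pos (hb : b ≠ 0) (h : IsSubpower b i x) : 0 < x := by
  obtain ⟨y, hy, -, rfl⟩ := h
  exact Nat.mul_pos (Nat.pow_pos (Nat.pos_of_ne_zero hb)) hy

theorem emultiplicity_eq (hb : b ≠ 0) (h : IsSubpower b i x) : emultiplicity b x = i := by
  obtain ⟨y, -, hby, rfl⟩ := h
  refine emultiplicity_eq_coe.mpr ⟨dvd_mul_right _ _, fun hdvd => hby ?_⟩
  rwa [pow_succ, mul_dvd_mul_iff_left (pow_ne_zero i hb)] at hdvd

theorem unique (hb : b ≠ 0) {j : ℕ} (hi : IsSubpower b i x) (hj : IsSubpower b j x) :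
    i = j := by
  exact_mod_cast (hi.emultiplicity_eq hb).symm.trans (hj.emultiplicity_eq hb)

theorem base_mul (h : IsSubpower b i x) : IsSubpower b (i + 1) (b * x) := by
  obtain ⟨y, hy, hby, rfl⟩ := h
  exact ⟨y, hy, hby, by ring⟩

theorem mul_of_coprime {a : ℕ} (h : IsSubpower b i x) (ha : a.Coprime b) :
    IsSubpower b i (a * x) := by
  obtain ⟨y, -, hby, rfl⟩ := h
  have hbay : ¬ b ∣ a * y := fun hd => hby (ha.symm.dvd_of_dvd_mul_left hd)
  exact ⟨a * y, Nat.pos_of_ne_zero fun h0 => hbay (h0 ▸ dvd_zero b), hbay, by ring⟩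

theorem isEvenSubpower_iff (hb : b ≠ 0) (h : IsSubpower b i x) :
    IsEvenSubpower b x ↔ Even i :=
  ⟨fun ⟨_, hj, hj'⟩ => h.unique hb hj' ▸ hj, fun hi => ⟨i, hi, h⟩⟩

end IsSubpower

theorem exists_isSubpower {b x : ℕ} (hb : b ≠ 1) (hx : x ≠ 0) : ∃ i, IsSubpower b i x := by
  obtain ⟨i, y, hby, rfl⟩ := Nat.exists_eq_pow_mul_and_not_dvd hx b hb
  exact ⟨i, y, Nat.pos_of_ne_zero (right_ne_zero_of_mul hx), hby, rfl⟩

section EvenSubpower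

variable {b x : ℕ}

theorem IsEvenSubpower.pos (hb : b ≠ 0) (h : IsEvenSubpower b x) : 0 < x := by
  obtain ⟨_, -, hi⟩ := h
  exact hi.pos hb

theorem isEvenSubpower_base_mul_iff (hb : 1 < b) (hx : x ≠ 0) :
    IsEvenSubpower b (b * x) ↔ ¬ IsEvenSubpower b x := by
  obtain ⟨i, hi⟩ := exists_isSubpower hb.ne' hx
  rw [hi.base_mul.isEvenSubpower_iff (by omega), hi.isEvenSubpower_iff (by omega),
    Nat.even_add_one]

theorem exists_isEvenSubpower_eq_base_mul (hb : 1 < b) (hx : x ≠ 0)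
    (h : ¬ IsEvenSubpower b x) : ∃ z, IsEvenSubpower b z ∧ x = b * z := by
  obtain ⟨i, hi⟩ := exists_isSubpower hb.ne' hx
  have hodd : Odd i := Nat.not_even_iff_odd.mp ((hi.isEvenSubpower_iff (by omega)).not.mp h)
  obtain ⟨k, rfl⟩ : ∃ k, i = k + 1 := Nat.exists_eq_add_one.mpr hodd.pos
  obtain ⟨y, hy, hby, rfl⟩ := hi
  exact ⟨b ^ k * y, ⟨k, by simpa [Nat.odd_add_one] using hodd, y, hy, hby, rfl⟩, by ring⟩

theorem mulSidonSets_isEvenSubpower {A : Set ℕ} (hb : b ≠ 0) (hA : ∀ a ∈ A, a.Coprime b) :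
    MulSidonSets A {b} {x | IsEvenSubpower b x} := by
  rintro a ha c rfl x ⟨i, hi, hx⟩ y ⟨j, hj, hy⟩ h
  have hij : i = j + 1 := (hx.mul_of_coprime (hA a ha)).unique hb (h ▸ hy.base_mul)
  exact absurd (hij ▸ hi) (Nat.even_add_one.not.mpr (not_not.mpr hj))

end EvenSubpower

noncomputable def evenSubpowerCount (b n : ℕ) : ℕ :=
  #((Icc 1 n).filter (IsEvenSubpower b))

theorem evenSubpowerCount_add_div {b : ℕ} (hb : 1 < b) (n : ℕ) :
    evenSubpowerCount b n + evenSubpowerCount b (n / b) = n := by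
  suffices h : evenSubpowerCount b (n / b) = #((Icc 1 n).filter fun x => ¬ IsEvenSubpower b x) by
    rw [h, evenSubpowerCount, card_filter_add_card_filter_not, Nat.card_Icc, Nat.add_sub_cancel]
  apply card_nbij (b * ·)
  · intro z hz
    simp only [coe_filter, mem_Icc, Set.mem_ofPred_eq] at hz ⊢
    obtain ⟨⟨hz1, hzn⟩, hE⟩ := hz
    refine ⟨⟨by nlinarith, mul_comm z b ▸ (Nat.le_div_iff_mul_le (by omega)).mp hzn⟩, ?_⟩
    exact (isEvenSubpower_base_mul_iff hb (by omega)).not.mpr (not_not.mpr hE)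
  · intro z _ w _ h
    exact Nat.eq_of_mul_eq_mul_left (by omega) h
  · intro x hx
    simp only [coe_filter, mem_Icc, Set.mem_ofPred_eq] at hx
    obtain ⟨⟨hx1, hxn⟩, hE⟩ := hx
    obtain ⟨z, hz, rfl⟩ := exists_isEvenSubpower_eq_base_mul hb (by omega) hE
    refine ⟨z, ?_, rfl⟩
    simp only [coe_filter, mem_Icc, Set.mem_ofPred_eq]
    exact ⟨⟨hz.pos (by omega), (Nat.le_div_iff_mul_le (by omega)).mpr (by linarith)⟩, hz⟩

theorem abs_le_natLog_add_one {b : ℕ} {e : ℕ → ℝ} (hb : 1 < b) (h0 : e 0 = 0)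
    (hstep : ∀ n, |e n| ≤ 1 + |e (n / b)|) (n : ℕ) : |e n| ≤ Nat.log b n + 1 := by
  induction n using Nat.strong_induction_on with
  | _ n ih =>
    rcases lt_or_ge n b with hnb | hnb
    · have := hstep n
      rw [Nat.div_eq_of_lt hnb, h0, abs_zero] at this
      linarith [(Nat.log b n).cast_nonneg (α := ℝ)]
    · have hlog : Nat.log b (n / b) + 1 = Nat.log b n := by
        have := Nat.log_pos hb hnb
        rw [Nat.log_div_base]
        omega
      calc |e n| ≤ 1 + |e (n / b)| := hstep n
        _ ≤ 1 + (Nat.log b (n / b) + 1) := by gcongr; exact ih _ (Nat.div_lt_self (by omega) hb)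
        _ = Nat.log b n + 1 := by rw [← hlog]; push_cast; ring

theorem tendsto_natLog_div_atTop (b : ℕ) :
    Tendsto (fun n : ℕ => (Nat.log b n : ℝ) / n) atTop (𝓝 0) := by
  have hlog : Tendsto (fun n : ℕ => Real.log n / n / Real.log b) atTop (𝓝 0) := by
    simpa using (Real.isLittleO_log_id_atTop.tendsto_div_nhds_zero.comp
      tendsto_natCast_atTop_atTop).div_const (Real.log b)
  refine squeeze_zero (fun n => by positivity) (fun n => ?_) hlog
  calc (Nat.log b n : ℝ) / n ≤ Real.logb b n / n := by gcongr; exact Real.natLog_le_logb n b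
    _ = Real.log n / n / Real.log b := by rw [Real.logb, div_right_comm]

theorem tendsto_div_of_abs_sub_mul_le_natLog {b : ℕ} {f : ℕ → ℝ} {c : ℝ}
    (h : ∀ n, |f n - n * c| ≤ Nat.log b n + 1) : Tendsto (fun n => f n / n) atTop (𝓝 c) := by
  have hbound : Tendsto (fun n : ℕ => (Nat.log b n : ℝ) / n + 1 / n) atTop (𝓝 0) := by
    simpa using (tendsto_natLog_div_atTop b).add tendsto_one_div_atTop_nhds_zero_nat
  rw [tendsto_iff_norm_sub_tendsto_zero]
  refine squeeze_zero_norm' ?_ hbound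
  filter_upwards [eventually_gt_atTop 0] with n hn
  have hn' : (0 : ℝ) < n := by exact_mod_cast hn
  rw [norm_norm, Real.norm_eq_abs, ← add_div, div_sub' hn'.ne', abs_div, abs_of_pos hn']
  gcongr
  exact h n

theorem tendsto_evenSubpowerCount_div {b : ℕ} (hb : 1 < b) :
    Tendsto (fun n => (evenSubpowerCount b n : ℝ) / n) atTop
      (𝓝 ((b : ℝ) / ((b : ℝ) + 1))) := by
  refine tendsto_div_of_abs_sub_mul_le_natLog <|
    abs_le_natLog_add_one hb (by simp [evenSubpowerCount]) fun n => ?_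
  set c : ℝ := (b : ℝ) / ((b : ℝ) + 1)
  have hb1 : (0 : ℝ) < (b : ℝ) + 1 := by positivity
  have hrec : (evenSubpowerCount b n : ℝ) = n - evenSubpowerCount b (n / b) := by
    rw [eq_sub_iff_add_eq]; exact_mod_cast evenSubpowerCount_add_div hb n
  have hn : (n : ℝ) = b * (n / b : ℕ) + (n % b : ℕ) := by
    exact_mod_cast (Nat.div_add_mod n b).symm
  have hmod : ((n % b : ℕ) : ℝ) / ((b : ℝ) + 1) ≤ 1 := by
    rw [div_le_one hb1]
    exact le_of_lt (by exact_mod_cast (Nat.mod_lt n (by omega)).trans (Nat.lt_succ_self b))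
  have herr : (evenSubpowerCount b n : ℝ) - n * c = ((n % b : ℕ) : ℝ) / ((b : ℝ) + 1) -
      ((evenSubpowerCount b (n / b) : ℝ) - (n / b : ℕ) * c) := by
    rw [hrec, hn]; simp only [c]; field_simp; ring
  rw [herr]
  refine (abs_sub _ _).trans ?_
  rw [abs_of_nonneg (by positivity)]
  gcongr

theorem card_filter_mem_le_evenSubpowerCount {A S : Set ℕ} {a b : ℕ} (hb : 1 < b) (ha : a ∈ A)
    (hab : a < b) (hco : a.Coprime b) (hS : MulSidonSets A {b} S) (n : ℕ) :
    #((Icc 1 n).filter (· ∈ S)) ≤ evenSubpowerCount b n := by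
  have ha0 : 0 < a := Nat.pos_of_ne_zero fun h => by simp [h] at hco; omega
  have hsplitS :=
    card_filter_add_card_filter_not (s := (Icc 1 n).filter (· ∈ S)) (IsEvenSubpower b)
  have hsplitE :=
    card_filter_add_card_filter_not (s := (Icc 1 n).filter (IsEvenSubpower b)) (· ∈ S)
  rw [filter_comm] at hsplitS
  have hswap : #(((Icc 1 n).filter (· ∈ S)).filter fun x => ¬ IsEvenSubpower b x) ≤
      #(((Icc 1 n).filter (IsEvenSubpower b)).filter fun x => x ∉ S) := by
    refine card_le_card_of_injOn (fun x => a * (x / b)) (fun x hx => ?_) (fun x hx y hy h => ?_)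
    · simp only [coe_filter, mem_filter, mem_Icc, Set.mem_ofPred_eq] at hx ⊢
      obtain ⟨⟨⟨hx1, hxn⟩, hxS⟩, hE⟩ := hx
      obtain ⟨z, ⟨i, hi, hz⟩, rfl⟩ := exists_isEvenSubpower_eq_base_mul hb (by omega) hE
      have haz : IsEvenSubpower b (a * z) := ⟨i, hi, hz.mul_of_coprime hco⟩
      rw [Nat.mul_div_cancel_left z (by omega)]
      refine ⟨⟨⟨haz.pos (by omega), ?_⟩, haz⟩, fun hazS => ?_⟩
      · exact hxn.trans' (Nat.mul_le_mul_right z hab.le)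
      · exact hab.ne (hS a ha b rfl _ hxS _ hazS (by ring)).1
    · simp only [coe_filter, mem_filter, mem_Icc, Set.mem_ofPred_eq] at hx hy
      obtain ⟨z, -, rfl⟩ := exists_isEvenSubpower_eq_base_mul hb (by omega) hx.2
      obtain ⟨w, -, rfl⟩ := exists_isEvenSubpower_eq_base_mul hb (by omega) hy.2
      simp only [Nat.mul_div_cancel_left _ (by omega : 0 < b)] at h
      rw [Nat.eq_of_mul_eq_mul_left ha0 h]
  rw [evenSubpowerCount]
  omega

theorem limsup_le_of_le_of_tendsto {u v : ℕ → ℝ} {c : ℝ} (hu : ∀ n, 0 ≤ u n)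
    (huv : ∀ n, u n ≤ v n) (hv : Tendsto v atTop (𝓝 c)) : limsup u atTop ≤ c :=
  hv.limsup_eq ▸ limsup_le_limsup (Eventually.of_forall huv)
    (isBoundedUnder_of_eventually_ge (Eventually.of_forall hu)).isCoboundedUnder_le
    hv.isBoundedUnder_le

theorem stmt9 (A : Set ℕ) (b : ℕ) (hb : 2 ≤ b) (hA : ∀ a ∈ A, Nat.Coprime a b) :
    MulSidonSets A {b} {x | IsEvenSubpower b x} ∧
    Filter.Tendsto
      (fun n : ℕ => (((Finset.Icc 1 n).filter (IsEvenSubpower b)).card : ℝ) / n)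
      Filter.atTop (nhds ((b : ℝ) / ((b : ℝ) + 1))) ∧
    ((∃ a ∈ A, a < b) → ∀ S : Set ℕ, MulSidonSets A {b} S →
      Filter.limsup
        (fun n : ℕ => (((Finset.Icc 1 n).filter (· ∈ S)).card : ℝ) / n)
        Filter.atTop ≤ (b : ℝ) / ((b : ℝ) + 1)) := by
  refine ⟨mulSidonSets_isEvenSubpower (by omega) hA, tendsto_evenSubpowerCount_div hb, ?_⟩
  rintro ⟨a, ha, hab⟩ S hS
  refine limsup_le_of_le_of_tendsto (fun n => by positivity) (fun n => ?_)
    (tendsto_evenSubpowerCount_div hb)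
  gcongr
  exact_mod_cast card_filter_mem_le_evenSubpowerCount hb ha hab (hA a ha) hS n
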